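/- Let {g_{αβ}} be a GL(n)-valued Čech cocycle for an ordered cover 𝒰 of X (g_{αγ} = g_{αβ}g_{βγ} on triple intersections). Then the Čech–de Rham cochain c̃₂ = {Tr(g_{αβ}⁻¹dg_{αβ} ∧ g_{αβ}⁻¹dg_{αβ} ∧ g_{αβ}⁻¹dg_{αβ})}_{α≺β} − 3{Tr(g_{αβ}⁻¹dg_{αβ} ∧ dg_{βγ}g_{βγ}⁻¹)}_{α≺β≺γ} is closed for the total differential d + δ on Č(𝒰, Ω_{DR}(U)). -/

import Mathlib

/-!
Write `θ = g⁻¹ dg` and `ω = dg g⁻¹`. Since `g` is even, `θ` is odd and satisfies the structure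
equation `dθ = -θ²`; hence `d Tr θ³ = -Tr θ⁴`, which vanishes because odd matrices anticommute
under the trace.

On a triple overlap the cocycle condition gives `θ_{αγ} = u + v` with `u = g_{βγ}⁻¹ θ_{αβ} g_{βγ}`
and `v = θ_{βγ}`. Expanding `Tr (u + v)³` by cyclicity, the Čech coboundary of `Tr θ³` is
`-3 (Tr u²v + Tr uv²)`. On the other hand `Tr(θ_{αβ} ω_{βγ}) = Tr(uv)`, and the structure equations
of `u + v` and of `v` give `d Tr(uv) = -(Tr u²v + Tr uv²)`.

On a quadruple overlap, `ω_{βδ} = ω_{βγ} + g_{βγ} ω_{γδ} g_{βγ}⁻¹` and the decomposition of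
`θ_{αγ}` make the Čech coboundary of `Tr(θ ω)` telescope, the two conjugated cross terms being
equal by cyclicity of the trace.
-/

namespace CechDeRham

variable {k Ω : Type*} [CommRing k] [Ring Ω] [Algebra k Ω] {l m n : Type*}
  {d : Ω →ₗ[k] Ω} {s : Ω →ₐ[k] Ω}

abbrev IsEven (s : Ω →ₐ[k] Ω) (M : Matrix l m Ω) : Prop := M.map s = M

abbrev IsOdd (s : Ω →ₐ[k] Ω) (M : Matrix l m Ω) : Prop := M.map s = -M

theorem IsEven.mul_isOdd [Fintype m] {A : Matrix l m Ω} {B : Matrix m n Ω} (hA : IsEven s A)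
    (hB : IsOdd s B) : IsOdd s (A * B) := by
  rw [IsOdd, Matrix.map_mul, hA, hB, Matrix.mul_neg]

theorem IsOdd.mul [Fintype m] {A : Matrix l m Ω} {B : Matrix m n Ω} (hA : IsOdd s A)
    (hB : IsOdd s B) : IsEven s (A * B) := by
  rw [IsEven, Matrix.map_mul, hA, hB, Matrix.neg_mul, Matrix.mul_neg, neg_neg]

theorem IsEven.mul [Fintype m] {A : Matrix l m Ω} {B : Matrix m n Ω} (hA : IsEven s A)
    (hB : IsEven s B) : IsEven s (A * B) := by
  rw [IsEven, Matrix.map_mul, hA, hB]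

theorem IsOdd.sub {A B : Matrix l m Ω} (hA : IsOdd s A) (hB : IsOdd s B) : IsOdd s (A - B) := by
  rw [IsOdd, Matrix.map_sub _ (map_sub s), hA, hB, neg_sub_neg, neg_sub]

theorem IsEven.isOdd_map (hsd : ∀ x, s (d x) = -d (s x)) {M : Matrix l m Ω} (hM : IsEven s M) :
    IsOdd s (M.map d) := by
  ext i j
  have hij : s (M i j) = M i j := congrFun₂ hM i j
  simp [hsd, hij]

theorem map_mul_of_leibniz [Fintype m] (hLeib : ∀ a b : Ω, d (a * b) = d a * b + s a * d b)
    (M : Matrix l m Ω) (N : Matrix m n Ω) :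
    (M * N).map d = M.map d * N + M.map s * N.map d := by
  ext i j
  simp [Matrix.mul_apply, map_sum, hLeib, Finset.sum_add_distrib]

theorem map_one_of_leibniz [Fintype m] [DecidableEq m]
    (hLeib : ∀ a b : Ω, d (a * b) = d a * b + s a * d b) : (1 : Matrix m m Ω).map d = 0 := by
  have h := map_mul_of_leibniz hLeib (1 : Matrix m m Ω) (1 : Matrix m m Ω)
  rw [Matrix.map_one _ (map_zero s) (map_one s), mul_one, mul_one, one_mul] at h
  exact left_eq_add.mp h

theorem trace_mul_comm_of_isEven [Fintype m] [Fintype n]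
    (hcomm : ∀ x y : Ω, s x = x → x * y = y * x) {M : Matrix m n Ω} (hM : IsEven s M)
    (N : Matrix n m Ω) : (M * N).trace = (N * M).trace := by
  simp only [Matrix.trace, Matrix.diag, Matrix.mul_apply]
  rw [Finset.sum_comm]
  exact Finset.sum_congr rfl fun j _ => Finset.sum_congr rfl fun i _ =>
    hcomm _ _ (congrFun₂ hM i j)

theorem trace_mul_comm_of_isOdd [Fintype m] [Fintype n]
    (hcomm : ∀ x y : Ω, s x = -x → s y = -y → x * y = -(y * x)) {M : Matrix m n Ω}
    {N : Matrix n m Ω} (hM : IsOdd s M) (hN : IsOdd s N) : (M * N).trace = -(N * M).trace := by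
  simp only [Matrix.trace, Matrix.diag, Matrix.mul_apply, ← Finset.sum_neg_distrib]
  rw [Finset.sum_comm]
  exact Finset.sum_congr rfl fun j _ => Finset.sum_congr rfl fun i _ =>
    hcomm _ _ (congrFun₂ hM i j) (congrFun₂ hN j i)

section SquareMatrices

variable [Fintype m]

local notation "𝕄" => Matrix m m Ω

theorem trace_sq_mul_sq_eq_zero_of_isOdd [Invertible (2 : k)]
    (hcomm : ∀ x y : Ω, s x = -x → s y = -y → x * y = -(y * x)) {θ : 𝕄}
    (hθ : IsOdd s θ) : (θ * θ * (θ * θ)).trace = 0 := by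
  have h := trace_mul_comm_of_isOdd hcomm hθ ((hθ.mul hθ).mul_isOdd hθ)
  simp only [mul_assoc] at h ⊢
  have h2 : (2 : k) • (θ * (θ * (θ * θ))).trace = 0 := by
    rw [two_smul]
    nth_rewrite 1 [h]
    exact neg_add_cancel _
  exact (isUnit_of_invertible (2 : k)).smul_eq_zero.mp h2

theorem d_trace_cube_eq_zero_of_isOdd [Invertible (2 : k)]
    (hLeib : ∀ a b : Ω, d (a * b) = d a * b + s a * d b)
    (hcomm : ∀ x y : Ω, s x = -x → s y = -y → x * y = -(y * x)) {θ : 𝕄}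
    (hθ : IsOdd s θ) (hdθ : θ.map d = -(θ * θ)) : d (θ * θ * θ).trace = 0 := by
  have hsq : (θ * θ).map d = 0 := by
    rw [map_mul_of_leibniz hLeib, hdθ, hθ, Matrix.neg_mul, Matrix.neg_mul, Matrix.mul_neg,
      neg_neg, mul_assoc, neg_add_cancel]
  rw [AddMonoidHom.map_trace, map_mul_of_leibniz hLeib, hsq, hθ.mul hθ, hdθ, zero_mul, zero_add,
    Matrix.mul_neg, Matrix.trace_neg, trace_sq_mul_sq_eq_zero_of_isOdd hcomm hθ, neg_zero]

theorem trace_add_cube_of_isOdd (hcomm : ∀ x y : Ω, s x = x → x * y = y * x)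
    {u v : 𝕄} (hu : IsOdd s u) (hv : IsOdd s v) :
    ((u + v) * (u + v) * (u + v)).trace = (u * u * u).trace + (v * v * v).trace
      + (3 : k) • ((u * u * v).trace + (u * v * v).trace) := by
  have expand : (u + v) * (u + v) * (u + v) = u * u * u + v * v * v
      + (u * u * v + u * v * u + v * (u * u)) + (u * v * v + v * (u * v) + v * v * u) := by
    noncomm_ring
  have huvu : (u * v * u).trace = (u * u * v).trace := by
    rw [trace_mul_comm_of_isEven hcomm (hu.mul hv), mul_assoc]
  have hvuu : (v * (u * u)).trace = (u * u * v).trace :=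
    (trace_mul_comm_of_isEven hcomm (hu.mul hu) v).symm
  have hvuv : (v * (u * v)).trace = (u * v * v).trace :=
    (trace_mul_comm_of_isEven hcomm (hu.mul hv) v).symm
  have hvvu : (v * v * u).trace = (u * v * v).trace := by
    rw [trace_mul_comm_of_isEven hcomm (hv.mul hv), mul_assoc]
  simp only [expand, Matrix.trace_add, huvu, hvuu, hvuv, hvvu]
  module

theorem d_trace_mul_of_isOdd (hLeib : ∀ a b : Ω, d (a * b) = d a * b + s a * d b)
    (hcomm : ∀ x y : Ω, s x = x → x * y = y * x) {u v : 𝕄} (hu : IsOdd s u)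
    (hv : IsOdd s v) (hduv : (u + v).map d = -((u + v) * (u + v))) (hdv : v.map d = -(v * v)) :
    d (u * v).trace = -((u * u * v).trace + (u * v * v).trace) := by
  have hdu : u.map d = -((u + v) * (u + v)) + v * v := by
    rw [← hduv, Matrix.map_add _ (map_add d), hdv, neg_add_cancel_right]
  have expand :
      (-((u + v) * (u + v)) + v * v) * v + -u * -(v * v) = -(u * u * v) - v * (u * v) := by
    noncomm_ring
  rw [AddMonoidHom.map_trace, map_mul_of_leibniz hLeib, hdu, hu, hdv, expand, Matrix.trace_sub,
    Matrix.trace_neg, ← trace_mul_comm_of_isEven hcomm (hu.mul hv), sub_eq_add_neg, neg_add]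

section Units

variable [DecidableEq m]

theorem IsEven.inv {u : 𝕄ˣ} (hu : IsEven s (u : 𝕄)) : IsEven s (↑u⁻¹ : 𝕄) := by
  refine (Units.inv_eq_of_mul_eq_one_right ?_).symm
  rw [← hu, ← Matrix.map_mul, u.mul_inv, Matrix.map_one _ (map_zero s) (map_one s)]

theorem map_inv_of_leibniz (hLeib : ∀ a b : Ω, d (a * b) = d a * b + s a * d b)
    {u : 𝕄ˣ} (hu : IsEven s (u : 𝕄)) :
    (↑u⁻¹ : 𝕄).map d = -((↑u⁻¹ : 𝕄) * (u : 𝕄).map d * (↑u⁻¹ : 𝕄)) := by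
  have h := map_mul_of_leibniz hLeib (↑u⁻¹ : 𝕄) (u : 𝕄)
  rw [u.inv_mul, map_one_of_leibniz hLeib, hu.inv] at h
  calc (↑u⁻¹ : 𝕄).map d = (↑u⁻¹ : 𝕄).map d * u * ↑u⁻¹ := by
        rw [Units.mul_inv_cancel_right]
    _ = -((↑u⁻¹ : 𝕄) * (u : 𝕄).map d * (↑u⁻¹ : 𝕄)) := by
        rw [eq_neg_of_add_eq_zero_left h.symm, Matrix.neg_mul]

def leftMaurerCartan (d : Ω →ₗ[k] Ω) (u : 𝕄ˣ) : 𝕄 :=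
  (↑u⁻¹ : 𝕄) * (u : 𝕄).map d

def rightMaurerCartan (d : Ω →ₗ[k] Ω) (u : 𝕄ˣ) : 𝕄 :=
  (u : 𝕄).map d * (↑u⁻¹ : 𝕄)

local notation "θ" => leftMaurerCartan d
local notation "ω" => rightMaurerCartan d

theorem isOdd_leftMaurerCartan (hsd : ∀ x, s (d x) = -d (s x)) {u : 𝕄ˣ}
    (hu : IsEven s (u : 𝕄)) : IsOdd s (θ u) :=
  hu.inv.mul_isOdd (hu.isOdd_map hsd)

theorem map_leftMaurerCartan (hLeib : ∀ a b : Ω, d (a * b) = d a * b + s a * d b)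
    (hdd : ∀ x, d (d x) = 0) {u : 𝕄ˣ} (hu : IsEven s (u : 𝕄)) :
    (θ u).map d = -(θ u * θ u) := by
  have hDD : ((u : 𝕄).map d).map d = 0 := by ext i j; exact hdd _
  rw [leftMaurerCartan, map_mul_of_leibniz hLeib, hDD, mul_zero, add_zero,
    map_inv_of_leibniz hLeib hu]
  simp only [Matrix.neg_mul, mul_assoc]

theorem leftMaurerCartan_mul (hLeib : ∀ a b : Ω, d (a * b) = d a * b + s a * d b)
    {u : 𝕄ˣ} (hu : IsEven s (u : 𝕄)) (v : 𝕄ˣ) :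
    θ (u * v) = (↑v⁻¹ : 𝕄) * θ u * (v : 𝕄) + θ v := by
  simp only [leftMaurerCartan, mul_inv_rev, Units.val_mul, map_mul_of_leibniz hLeib, hu,
    mul_add, mul_assoc, Units.inv_mul_cancel_left]

theorem rightMaurerCartan_mul (hLeib : ∀ a b : Ω, d (a * b) = d a * b + s a * d b)
    {u : 𝕄ˣ} (hu : IsEven s (u : 𝕄)) (v : 𝕄ˣ) :
    ω (u * v) = ω u + (u : 𝕄) * ω v * (↑u⁻¹ : 𝕄) := by
  simp only [rightMaurerCartan, mul_inv_rev, Units.val_mul, map_mul_of_leibniz hLeib, hu,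
    add_mul, mul_assoc, Units.mul_inv_cancel_left]

theorem trace_conj_of_isEven (hcomm : ∀ x y : Ω, s x = x → x * y = y * x)
    {u : 𝕄ˣ} (hu : IsEven s (u : 𝕄)) (M : 𝕄) :
    ((↑u⁻¹ : 𝕄) * M * (u : 𝕄)).trace = M.trace := by
  rw [mul_assoc, trace_mul_comm_of_isEven hcomm hu.inv, mul_assoc, u.mul_inv, mul_one]

theorem trace_cube_leftMaurerCartan_cech (hLeib : ∀ a b : Ω, d (a * b) = d a * b + s a * d b)
    (hdd : ∀ x, d (d x) = 0) (hsd : ∀ x, s (d x) = -d (s x))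
    (hcomm : ∀ x y : Ω, s x = x → x * y = y * x) {u v : 𝕄ˣ}
    (hu : IsEven s (u : 𝕄)) (hv : IsEven s (v : 𝕄)) :
    (θ v * θ v * θ v).trace - (θ (u * v) * θ (u * v) * θ (u * v)).trace
      + (θ u * θ u * θ u).trace - (3 : k) • d (θ u * ω v).trace = 0 := by
  have huv : IsEven s ((u * v : 𝕄ˣ) : 𝕄) := hu.mul hv
  set a := (↑v⁻¹ : 𝕄) * θ u * (v : 𝕄) with ha_def
  have hθuv : θ (u * v) = a + θ v := leftMaurerCartan_mul hLeib hu v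
  have ha : IsOdd s a := by
    have h := (isOdd_leftMaurerCartan hsd huv).sub (isOdd_leftMaurerCartan hsd hv)
    rwa [hθuv, add_sub_cancel_right] at h
  have ha_cube : (a * a * a).trace = (θ u * θ u * θ u).trace := by
    rw [← trace_conj_of_isEven hcomm hv (θ u * θ u * θ u)]
    simp only [ha_def, mul_assoc, Units.mul_inv_cancel_left]
  have hb : (θ u * ω v).trace = (a * θ v).trace := by
    rw [← trace_conj_of_isEven hcomm hv (θ u * ω v)]
    simp only [ha_def, leftMaurerCartan, rightMaurerCartan, mul_assoc, Units.inv_mul, mul_one,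
      Units.mul_inv_cancel_left]
  have hda := d_trace_mul_of_isOdd hLeib hcomm ha (isOdd_leftMaurerCartan hsd hv)
    (hθuv ▸ map_leftMaurerCartan hLeib hdd huv) (map_leftMaurerCartan hLeib hdd hv)
  rw [hθuv, trace_add_cube_of_isOdd hcomm ha (isOdd_leftMaurerCartan hsd hv), ha_cube, hb, hda]
  module

theorem trace_leftMaurerCartan_mul_rightMaurerCartan_cech
    (hLeib : ∀ a b : Ω, d (a * b) = d a * b + s a * d b)
    (hcomm : ∀ x y : Ω, s x = x → x * y = y * x) {u v : 𝕄ˣ}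
    (hu : IsEven s (u : 𝕄)) (hv : IsEven s (v : 𝕄)) (w : 𝕄ˣ) :
    (θ v * ω w).trace - (θ (u * v) * ω w).trace + (θ u * ω (v * w)).trace
      - (θ u * ω v).trace = 0 := by
  have hconj : (θ u * ((v : 𝕄) * ω w * (↑v⁻¹ : 𝕄))).trace
      = ((↑v⁻¹ : 𝕄) * θ u * v * ω w).trace := by
    simpa only [mul_assoc] using
      (trace_mul_comm_of_isEven hcomm hv.inv (θ u * (v : 𝕄) * ω w)).symm
  rw [leftMaurerCartan_mul hLeib hu, rightMaurerCartan_mul hLeib hv]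
  simp only [add_mul, mul_add, Matrix.trace_add, hconj]
  abel

end Units

end SquareMatrices

end CechDeRham

open CechDeRham

theorem statement16_general
    (k : Type) [Field k] [CharZero k]
    (ι : Type) [LinearOrder ι]
    (Ω : Type) [Ring Ω] [Algebra k Ω]
    (dΩ : Ω →ₗ[k] Ω) (sΩ : Ω →ₐ[k] Ω)
    (hdΩ : dΩ ∘ₗ dΩ = 0)
    (hsdΩ : sΩ.toLinearMap ∘ₗ dΩ = - (dΩ ∘ₗ sΩ.toLinearMap))
    (hLeib : ∀ a b : Ω, dΩ (a * b) = dΩ a * b + sΩ a * dΩ b)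
    (hcommEven : ∀ x y : Ω, sΩ x = x → x * y = y * x)
    (hcommOdd : ∀ x y : Ω, sΩ x = -x → sΩ y = -y → x * y = -(y * x))
    (n : ℕ)
    (g gInv : ι → ι → Matrix (Fin n) (Fin n) Ω)
    -- the entries of g are functions (degree 0 forms)
    (hgdeg : ∀ α β i j, sΩ (g α β i j) = g α β i j)
    (hginv₁ : ∀ α β, α < β → g α β * gInv α β = 1)
    (hginv₂ : ∀ α β, α < β → gInv α β * g α β = 1)
    -- the cocycle condition g_{αγ} = g_{αβ}·g_{βγ}
    (hcocycle : ∀ α β γ, α < β → β < γ → g α γ = g α β * g β γ) :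
    -- with a_{αβ} = Tr((g⁻¹dg)³) and b_{αβγ} = Tr(g⁻¹dg ∧ dg·g⁻¹):
    (letI a : ι → ι → Ω := fun α β =>
      ((gInv α β * (g α β).map dΩ) * (gInv α β * (g α β).map dΩ)
        * (gInv α β * (g α β).map dΩ)).trace
     letI b : ι → ι → ι → Ω := fun α β γ =>
      ((gInv α β * (g α β).map dΩ) * ((g β γ).map dΩ * gInv β γ)).trace
     -- (d + δ)(a − 3b) = 0, componentwise:
     (∀ α β, α < β → dΩ (a α β) = 0)
     ∧
     (∀ α β γ, α < β → β < γ →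
        (a β γ - a α γ + a α β) - (3 : k) • dΩ (b α β γ) = 0)
     ∧
     (∀ α β γ δ', α < β → β < γ → γ < δ' →
        b β γ δ' - b α γ δ' + b α β δ' - b α β γ = 0)) := by
  have hdd (x : Ω) : dΩ (dΩ x) = 0 := LinearMap.congr_fun hdΩ x
  have hsd (x : Ω) : sΩ (dΩ x) = -dΩ (sΩ x) := LinearMap.congr_fun hsdΩ x
  let G (α β : ι) (h : α < β) : (Matrix (Fin n) (Fin n) Ω)ˣ :=
    ⟨g α β, gInv α β, hginv₁ α β h, hginv₂ α β h⟩
  have hG (α β : ι) (h : α < β) : IsEven sΩ (G α β h : Matrix (Fin n) (Fin n) Ω) :=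
    Matrix.ext (hgdeg α β)
  have hGmul (α β γ : ι) (hαβ : α < β) (hβγ : β < γ) :
      G α β hαβ * G β γ hβγ = G α γ (hαβ.trans hβγ) :=
    Units.ext (hcocycle α β γ hαβ hβγ).symm
  refine ⟨fun α β hαβ => ?_, fun α β γ hαβ hβγ => ?_, fun α β γ δ hαβ hβγ hγδ => ?_⟩
  · exact d_trace_cube_eq_zero_of_isOdd hLeib hcommOdd (isOdd_leftMaurerCartan hsd (hG α β hαβ))
      (map_leftMaurerCartan hLeib hdd (hG α β hαβ))
  · have h := trace_cube_leftMaurerCartan_cech hLeib hdd hsd hcommEven (hG α β hαβ) (hG β γ hβγ)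
    rwa [hGmul α β γ hαβ hβγ] at h
  · have h := trace_leftMaurerCartan_mul_rightMaurerCartan_cech hLeib hcommEven (hG α β hαβ)
      (hG β γ hβγ) (G γ δ hγδ)
    rwa [hGmul α β γ hαβ hβγ, hGmul β γ δ hβγ hγδ] at h

theorem statement16
    (k : Type) [Field k] [CharZero k]
    (ι : Type) [LinearOrder ι]
    (Ω : Type) [Ring Ω] [Algebra k Ω]
    (dΩ : Ω →ₗ[k] Ω) (sΩ : Ω →ₐ[k] Ω)
    (hdΩ : dΩ ∘ₗ dΩ = 0)
    (hsΩ : (sΩ.toLinearMap) ∘ₗ (sΩ.toLinearMap) = LinearMap.id)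
    (hsdΩ : sΩ.toLinearMap ∘ₗ dΩ = - (dΩ ∘ₗ sΩ.toLinearMap))
    (hLeib : ∀ a b : Ω, dΩ (a * b) = dΩ a * b + sΩ a * dΩ b)
    (hcommEven : ∀ x y : Ω, sΩ x = x → x * y = y * x)
    (hcommOdd : ∀ x y : Ω, sΩ x = -x → sΩ y = -y → x * y = -(y * x))
    (n : ℕ)
    (g gInv : ι → ι → Matrix (Fin n) (Fin n) Ω)
    -- the entries of g are functions (degree 0 forms)
    (hgdeg : ∀ α β i j, sΩ (g α β i j) = g α β i j)
    (hginv₁ : ∀ α β, α < β → g α β * gInv α β = 1)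
    (hginv₂ : ∀ α β, α < β → gInv α β * g α β = 1)
    -- the cocycle condition g_{αγ} = g_{αβ}·g_{βγ}
    (hcocycle : ∀ α β γ, α < β → β < γ → g α γ = g α β * g β γ) :
    -- with a_{αβ} = Tr((g⁻¹dg)³) and b_{αβγ} = Tr(g⁻¹dg ∧ dg·g⁻¹):
    (letI a : ι → ι → Ω := fun α β =>
      ((gInv α β * (g α β).map dΩ) * (gInv α β * (g α β).map dΩ)
        * (gInv α β * (g α β).map dΩ)).trace
     letI b : ι → ι → ι → Ω := fun α β γ =>
      ((gInv α β * (g α β).map dΩ) * ((g β γ).map dΩ * gInv β γ)).trace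
     -- (d + δ)(a − 3b) = 0, componentwise:
     (∀ α β, α < β → dΩ (a α β) = 0)
     ∧
     (∀ α β γ, α < β → β < γ →
        (a β γ - a α γ + a α β) - (3 : k) • dΩ (b α β γ) = 0)
     ∧
     (∀ α β γ δ', α < β → β < γ → γ < δ' →
        b β γ δ' - b α γ δ' + b α β δ' - b α β γ = 0)) :=
  statement16_general k ι Ω dΩ sΩ hdΩ hsdΩ hLeib hcommEven hcommOdd n g gInv hgdeg hginv₁ hginv₂
    hcocycle
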